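/- arXiv:1009.1022 — 5 statements merged into one kernel-verified Lean document; each statement's English description precedes it below -/
import Mathlib

section
/- Let (X, 𝓘) be a Polish ideal space. Assume a family 𝓐 ⊆ 𝓘 satisfies: (1) X ∖ ⋃𝓐 ∈ 𝓘; (2) the set Z = {x ∈ X : ⋃{A ∈ 𝓐 : x ∈ A} ∉ 𝓘} belongs to 𝓘; (3) for the family 𝓕 = {⋃{A ∈ 𝓐 : x ∈ A} : x ∈ X ∖ Z}, every subfamily of 𝓕 whose union contains some 𝓘-positive Borel set has cardinality at least 2^ℵ₀. Then there exists a subfamily 𝓐₀ ⊆ 𝓐 such that ⋃𝓐₀ is completely 𝓘-nonmeasurable. -/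
/-! Enumerate the `𝓘`-positive Borel sets (there are at most `𝔠` of them) in order type `𝔠` and
choose by transfinite recursion, in the `α`-th of them and off a Borel `𝓘`-hull `N` of
`Z ∪ (X \ ⋃₀ 𝓐)`, two points `p_α` and `q_α` such that no member of `𝓐` contains both some `p_β`
and some `q_γ`. This is possible since fewer than `𝔠` points precede stage `α`, and by (3) the
stars `⋃₀ {A ∈ 𝓐 | x ∈ A}` of fewer than `𝔠` points outside `Z` cannot cover a positive Borel set.
The members of `𝓐` containing some `p_α` then form the required subfamily: its union contains
every `p_α` and misses every `q_α`. -/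

open Set

universe u

open Cardinal in
theorem MeasurableSpace.mk_setOf_measurableSet_le_continuum {α : Type*} [MeasurableSpace α]
    [h : MeasurableSpace.CountablyGenerated α] : #{s : Set α | MeasurableSet s} ≤ 𝔠 := by
  rcases h with ⟨⟨b, hbc, rfl⟩⟩
  exact cardinal_measurableSet_le_continuum (hbc.le_aleph0.trans aleph0_le_continuum)

section Separation

open Cardinal

variable {Y ι : Type u} {R : Y → Y → Prop} {κ : Cardinal.{u}}

theorem exists_separated_of_forall_mk_Iio_lt [LinearOrder ι] [WellFoundedLT ι]
    (hR : ∀ x y, R x y → R y x) (hκ : ℵ₀ ≤ κ) (hι : ∀ a : ι, #(Iio a) < κ) {B : ι → Set Y}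
    (havoid : ∀ a (T : Set Y), #T < κ → ∃ p ∈ B a, ∀ t ∈ T, ¬R t p) :
    ∃ P Q : Set Y, (∀ a, (B a ∩ P).Nonempty ∧ (B a ∩ Q).Nonempty) ∧
      ∀ p ∈ P, ∀ q ∈ Q, ¬R p q := by
  rcases isEmpty_or_nonempty ι with _ | ⟨⟨a₀⟩⟩
  · exact ⟨∅, ∅, isEmptyElim, by simp⟩
  have : Nonempty Y := by
    obtain ⟨p, -⟩ := havoid a₀ ∅ (by simpa using aleph0_pos.trans_le hκ)
    exact ⟨p⟩
  choose! pick hpick_mem hpick_avoid using havoid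
  let g : ι → Y × Y := wellFounded_lt.fix fun a IH =>
    let p := pick a (range fun b : Iio a => (IH b b.2).2)
    (p, pick a (insert p (range fun b : Iio a => (IH b b.2).1)))
  have hg : ∀ a, g a = (pick a (range fun b : Iio a => (g b).2),
      pick a (insert (g a).1 (range fun b : Iio a => (g b).1))) := by
    intro a
    rw [show g a = _ from wellFounded_lt.fix_eq _ a]
  have hsmall : ∀ a (f : Iio a → Y), #(range f) < κ := fun a f => mk_range_le.trans_lt (hι a)
  have hsmall_insert : ∀ a (f : Iio a → Y) y, #(insert y (range f) : Set Y) < κ := fun a f y =>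
    mk_insert_le.trans_lt (add_one_lt_of_lt hκ (hsmall a f))
  have hP_mem : ∀ a, (g a).1 ∈ B a := fun a => by
    rw [hg a]; exact hpick_mem a _ (hsmall a _)
  have hQ_mem : ∀ a, (g a).2 ∈ B a := fun a => by
    rw [hg a]; exact hpick_mem a _ (hsmall_insert a _ _)
  have hP_avoid : ∀ b a, b < a → ¬R (g b).2 (g a).1 := fun b a hba => by
    rw [hg a]; exact hpick_avoid a _ (hsmall a _) _ ⟨⟨b, hba⟩, rfl⟩
  have hQ_avoid : ∀ b a, b ≤ a → ¬R (g b).1 (g a).2 := by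
    intro b a hba
    rw [hg a]
    refine hpick_avoid a _ (hsmall_insert a _ _) _ ?_
    rcases hba.lt_or_eq with hba | rfl
    · exact mem_insert_of_mem _ ⟨⟨b, hba⟩, rfl⟩
    · exact mem_insert _ _
  refine ⟨range fun a => (g a).1, range fun a => (g a).2,
    fun a => ⟨⟨_, hP_mem a, a, rfl⟩, ⟨_, hQ_mem a, a, rfl⟩⟩, ?_⟩
  rintro _ ⟨b, rfl⟩ _ ⟨a, rfl⟩
  rcases le_or_gt b a with hba | hab
  · exact hQ_avoid b a hba
  · exact fun h => hP_avoid a b hab (hR _ _ h)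

theorem exists_separated_of_mk_le (hR : ∀ x y, R x y → R y x) (hκ : ℵ₀ ≤ κ) {𝓑 : Set (Set Y)}
    (h𝓑 : #𝓑 ≤ κ) (havoid : ∀ B ∈ 𝓑, ∀ T : Set Y, #T < κ → ∃ p ∈ B, ∀ t ∈ T, ¬R t p) :
    ∃ P Q : Set Y, (∀ B ∈ 𝓑, (B ∩ P).Nonempty ∧ (B ∩ Q).Nonempty) ∧
      ∀ p ∈ P, ∀ q ∈ Q, ¬R p q := by
  rcases isEmpty_or_nonempty 𝓑 with _ | _
  · exact ⟨∅, ∅, fun B hB => isEmptyElim (⟨B, hB⟩ : 𝓑), by simp⟩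
  obtain ⟨e⟩ : Nonempty (𝓑 ↪ κ.ord.ToType) := by rwa [← le_def, mk_ord_toType]
  let f : κ.ord.ToType → 𝓑 := Function.invFun e
  obtain ⟨P, Q, hPQ, hsep⟩ := exists_separated_of_forall_mk_Iio_lt hR hκ
    (fun a => by simpa using mk_Iio_lt a (by simp)) (B := fun a => f a) (fun a => havoid _ (f a).2)
  refine ⟨P, Q, fun B hB => ?_, hsep⟩
  obtain ⟨a, ha⟩ : ∃ a, f a = ⟨B, hB⟩ := Function.invFun_surjective e.injective _
  simpa [ha] using hPQ a

end Separation

section IdealSpace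

variable {X : Type*} {𝓘 𝓐 : Set (Set X)}

def coverStar (𝓐 : Set (Set X)) (x : X) : Set X := ⋃₀ {A | A ∈ 𝓐 ∧ x ∈ A}

theorem mem_coverStar_comm {x y : X} (h : y ∈ coverStar 𝓐 x) : x ∈ coverStar 𝓐 y :=
  let ⟨A, ⟨hA, hx⟩, hy⟩ := h
  ⟨A, ⟨hA, hy⟩, hx⟩

theorem union_mem_of_iUnion_mem (hDown : ∀ A B : Set X, A ⊆ B → B ∈ 𝓘 → A ∈ 𝓘)
    (hUnion : ∀ f : ℕ → Set X, (∀ n, f n ∈ 𝓘) → (⋃ n, f n) ∈ 𝓘) {A B : Set X}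
    (hA : A ∈ 𝓘) (hB : B ∈ 𝓘) : A ∪ B ∈ 𝓘 :=
  hDown _ _
    (union_subset (subset_iUnion_of_subset 0 (by simp)) (subset_iUnion_of_subset 1 (by simp)))
    (hUnion (fun n => if n = 0 then A else B) fun n => by split <;> assumption)

theorem diff_notMem_of_iUnion_mem (hDown : ∀ A B : Set X, A ⊆ B → B ∈ 𝓘 → A ∈ 𝓘)
    (hUnion : ∀ f : ℕ → Set X, (∀ n, f n ∈ 𝓘) → (⋃ n, f n) ∈ 𝓘) {B N : Set X}
    (hB : B ∉ 𝓘) (hN : N ∈ 𝓘) : B \ N ∉ 𝓘 := fun h =>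
  hB (hDown _ _ (subset_sdiff_union B N) (union_mem_of_iUnion_mem hDown hUnion h hN))

open Cardinal in
theorem exists_mem_diff_forall_notMem_coverStar [MeasurableSpace X]
    (hDown : ∀ A B : Set X, A ⊆ B → B ∈ 𝓘 → A ∈ 𝓘)
    (hUnion : ∀ f : ℕ → Set X, (∀ n, f n ∈ 𝓘) → (⋃ n, f n) ∈ 𝓘)
    (hcover : ∀ 𝓖 ⊆ coverStar 𝓐 '' {x | coverStar 𝓐 x ∈ 𝓘},
      (∃ B, MeasurableSet B ∧ B ∉ 𝓘 ∧ B ⊆ ⋃₀ 𝓖) → 𝔠 ≤ #𝓖)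
    {N : Set X} (hNm : MeasurableSet N) (hN : N ∈ 𝓘) (hZN : {x | coverStar 𝓐 x ∉ 𝓘} ⊆ N)
    {B : Set X} (hBm : MeasurableSet B) (hB : B ∉ 𝓘) {T : Set X} (hT : #T < 𝔠) :
    ∃ p ∈ B \ N, ∀ t ∈ T \ N, p ∉ coverStar 𝓐 t := by
  by_contra! hcontra
  have hsmall : coverStar 𝓐 '' (T \ N) ⊆ coverStar 𝓐 '' {x | coverStar 𝓐 x ∈ 𝓘} :=
    image_mono fun t ht => not_not.1 fun h => ht.2 (hZN h)
  have hcovered : B \ N ⊆ ⋃₀ (coverStar 𝓐 '' (T \ N)) := fun p hp =>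
    let ⟨t, ht, hpt⟩ := hcontra p hp
    ⟨_, mem_image_of_mem _ ht, hpt⟩
  have hbig := hcover _ hsmall
    ⟨B \ N, hBm.diff hNm, diff_notMem_of_iUnion_mem hDown hUnion hB hN, hcovered⟩
  exact (hbig.trans (mk_image_le.trans (mk_le_mk_of_subset sdiff_subset))).not_gt hT

end IdealSpace

theorem stmt_0_general {X : Type} [TopologicalSpace X] [PolishSpace X]
    [MeasurableSpace X] [BorelSpace X]
    (𝓘 : Set (Set X))
    (hDown : ∀ A B : Set X, A ⊆ B → B ∈ 𝓘 → A ∈ 𝓘)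
    (hUnion : ∀ f : ℕ → Set X, (∀ n, f n ∈ 𝓘) → (⋃ n, f n) ∈ 𝓘)
    (hBase : ∀ A ∈ 𝓘, ∃ B : Set X, A ⊆ B ∧ MeasurableSet B ∧ B ∈ 𝓘)
    (𝓐 : Set (Set X))
    (h1 : univ \ ⋃₀ 𝓐 ∈ 𝓘)
    (h2 : {x : X | ⋃₀ {A | A ∈ 𝓐 ∧ x ∈ A} ∉ 𝓘} ∈ 𝓘)
    (h3 : ∀ 𝓖 ⊆ {S : Set X |
        ∃ x ∈ univ \ {x : X | ⋃₀ {A | A ∈ 𝓐 ∧ x ∈ A} ∉ 𝓘}, S = ⋃₀ {A | A ∈ 𝓐 ∧ x ∈ A}},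
      (∃ B : Set X, MeasurableSet B ∧ B ∉ 𝓘 ∧ B ⊆ ⋃₀ 𝓖) → Cardinal.continuum ≤ Cardinal.mk ↥𝓖) :
    ∃ 𝓐₀ ⊆ 𝓐, ∀ B : Set X, MeasurableSet B → B ∉ 𝓘 →
      (⋃₀ 𝓐₀ ∩ B).Nonempty ∧ (B \ ⋃₀ 𝓐₀).Nonempty := by
  obtain ⟨Z, hZ, hZm, hZI⟩ := hBase _ h2
  obtain ⟨W, hW, hWm, hWI⟩ := hBase _ h1
  set N := Z ∪ W
  have hcover : ∀ 𝓖 ⊆ coverStar 𝓐 '' {x | coverStar 𝓐 x ∈ 𝓘},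
      (∃ B, MeasurableSet B ∧ B ∉ 𝓘 ∧ B ⊆ ⋃₀ 𝓖) → Cardinal.continuum ≤ Cardinal.mk 𝓖 :=
    fun 𝓖 h𝓖 => h3 𝓖 <| h𝓖.trans <|
      image_subset_iff.2 fun x hx => ⟨x, ⟨trivial, not_not_intro hx⟩, rfl⟩
  let R : X → X → Prop := fun x y => x ∉ N ∧ y ∉ N ∧ y ∈ coverStar 𝓐 x
  obtain ⟨P, Q, hPQ, hsep⟩ := exists_separated_of_mk_le (R := R)
    (fun x y ⟨hx, hy, h⟩ => ⟨hy, hx, mem_coverStar_comm h⟩) Cardinal.aleph0_le_continuum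
    (𝓑 := (· \ N) '' {B | MeasurableSet B ∧ B ∉ 𝓘})
    (Cardinal.mk_image_le.trans ((Cardinal.mk_le_mk_of_subset fun B hB => hB.1).trans
      MeasurableSpace.mk_setOf_measurableSet_le_continuum))
    (by
      rintro _ ⟨B, ⟨hBm, hB⟩, rfl⟩ T hT
      obtain ⟨p, hp, hpT⟩ := exists_mem_diff_forall_notMem_coverStar hDown hUnion hcover
        (hZm.union hWm) (union_mem_of_iUnion_mem hDown hUnion hZI hWI)
        (hZ.trans subset_union_left) hBm hB hT
      exact ⟨p, hp, fun t ht ⟨htN, _, hpt⟩ => hpT t ⟨ht, htN⟩ hpt⟩)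
  refine ⟨{A | A ∈ 𝓐 ∧ ∃ p ∈ P \ N, p ∈ A}, fun A hA => hA.1, fun B hBm hB => ?_⟩
  obtain ⟨⟨p, ⟨hpB, hpN⟩, hpP⟩, ⟨q, ⟨hqB, hqN⟩, hqQ⟩⟩ := hPQ _ ⟨B, ⟨hBm, hB⟩, rfl⟩
  refine ⟨?_, q, hqB, ?_⟩
  · obtain ⟨A, hA, hpA⟩ : p ∈ ⋃₀ 𝓐 := not_not.1 fun h => hpN (Or.inr (hW ⟨trivial, h⟩))
    exact ⟨p, ⟨A, ⟨hA, p, ⟨hpP, hpN⟩, hpA⟩, hpA⟩, hpB⟩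
  · rintro ⟨A, ⟨hA, p', ⟨hp'P, hp'N⟩, hp'A⟩, hqA⟩
    exact hsep p' hp'P q hqQ ⟨hp'N, hqN, A, ⟨hA, hp'A⟩, hqA⟩

/-- key lemma, Theorem `klucz`.
Let `(X, 𝓘)` be a Polish ideal space. If `𝓐 ⊆ 𝓘` satisfies
(1) `X \ ⋃𝓐 ∈ 𝓘`,
(2) `Z = {x : ⋃{A ∈ 𝓐 : x ∈ A} ∉ 𝓘} ∈ 𝓘`,
(3) every subfamily of `𝓕 = {⋃{A ∈ 𝓐 : x ∈ A} : x ∈ X \ Z}` whose union contains an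
    `𝓘`-positive Borel set has cardinality at least `2^ℵ₀`,
then some subfamily `𝓐₀ ⊆ 𝓐` has completely `𝓘`-nonmeasurable union. -/
theorem stmt_0 {X : Type} [TopologicalSpace X] [PolishSpace X] [Uncountable X]
    [MeasurableSpace X] [BorelSpace X]
    (𝓘 : Set (Set X))
    (hDown : ∀ A B : Set X, A ⊆ B → B ∈ 𝓘 → A ∈ 𝓘)
    (hUnion : ∀ f : ℕ → Set X, (∀ n, f n ∈ 𝓘) → (⋃ n, f n) ∈ 𝓘)
    (hProper : (univ : Set X) ∉ 𝓘)
    (hSing : ∀ x : X, ({x} : Set X) ∈ 𝓘)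
    (hBase : ∀ A ∈ 𝓘, ∃ B : Set X, A ⊆ B ∧ MeasurableSet B ∧ B ∈ 𝓘)
    (𝓐 : Set (Set X)) (h𝓐 : 𝓐 ⊆ 𝓘)
    (h1 : univ \ ⋃₀ 𝓐 ∈ 𝓘)
    (h2 : {x : X | ⋃₀ {A | A ∈ 𝓐 ∧ x ∈ A} ∉ 𝓘} ∈ 𝓘)
    (h3 : ∀ 𝓖 ⊆ {S : Set X |
        ∃ x ∈ univ \ {x : X | ⋃₀ {A | A ∈ 𝓐 ∧ x ∈ A} ∉ 𝓘}, S = ⋃₀ {A | A ∈ 𝓐 ∧ x ∈ A}},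
      (∃ B : Set X, MeasurableSet B ∧ B ∉ 𝓘 ∧ B ⊆ ⋃₀ 𝓖) → Cardinal.continuum ≤ Cardinal.mk ↥𝓖) :
    ∃ 𝓐₀ ⊆ 𝓐, ∀ B : Set X, MeasurableSet B → B ∉ 𝓘 →
      (⋃₀ 𝓐₀ ∩ B).Nonempty ∧ (B \ ⋃₀ 𝓐₀).Nonempty :=
  stmt_0_general 𝓘 hDown hUnion hBase 𝓐 h1 h2 h3
end

section
/- Let (X, 𝓘) be a Polish ideal space such that every family of at most fewer than 2^ℵ₀ sets from 𝓘 never covers any 𝓘-positive Borel set (i.e. cov_h(𝓘) = 2^ℵ₀). Assume a family 𝓐 ⊆ 𝓘 satisfies: (1) X ∖ ⋃𝓐 ∈ 𝓘; (2) the set Z = {x ∈ X : ⋃{A ∈ 𝓐 : x ∈ A} ∉ 𝓘} belongs to 𝓘. Then there exists a subfamily 𝓐₀ ⊆ 𝓐 such that ⋃𝓐₀ is completely 𝓘-nonmeasurable. -/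
open Set

/-!
Enumerate the `𝓘`-positive Borel sets (there are at most `𝔠` of them) in order type `𝔠` and
choose, by transfinite recursion, two points `x_B, y_B ∈ B` for each of them, all outside
`Z = {x | S x ∉ 𝓘}`, where `S x = ⋃ {A ∈ 𝓐 | x ∈ A}`, with `x_B ∈ ⋃₀ 𝓐`, and each new point
outside `S p` for every earlier point `p`. These `S p` lie in `𝓘` because `p ∉ Z`, and fewer than
`𝔠` of them cannot cover a positive Borel set, so the recursion never gets stuck. Then no member
of `𝓐` contains two of the chosen points, so the union of those members of `𝓐` that contain some
`x_B` contains every `x_B` and no `y_B`.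
-/

open scoped Cardinal
open Cardinal (aleph0_le_continuum mk_le_mk_of_subset)

universe u

variable {X : Type u}

theorem MeasurableSpace.mk_measurableSet_le_continuum [MeasurableSpace X]
    [MeasurableSpace.CountablyGenerated X] : #{s : Set X | MeasurableSet s} ≤ 𝔠 := by
  obtain ⟨b, hb, rfl⟩ := MeasurableSpace.CountablyGenerated.isCountablyGenerated (α := X)
  have : Countable b := hb.to_subtype
  exact cardinal_measurableSet_le_continuum (Cardinal.mk_le_aleph0.trans aleph0_le_continuum)

def sUnionThrough (𝓐 : Set (Set X)) (x : X) : Set X :=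
  ⋃₀ {A | A ∈ 𝓐 ∧ x ∈ A}

theorem subset_sUnionThrough {𝓐 : Set (Set X)} {A : Set X} {x : X} (hA : A ∈ 𝓐)
    (hx : x ∈ A) : A ⊆ sUnionThrough 𝓐 x :=
  subset_sUnion_of_mem ⟨hA, hx⟩

def NotCoveredBySmall (𝓘 : Set (Set X)) (T : Set X) : Prop :=
  ∀ 𝓖 ⊆ 𝓘, #𝓖 < 𝔠 → ¬ T ⊆ ⋃₀ 𝓖

namespace NotCoveredBySmall

variable {𝓘 : Set (Set X)} {T : Set X}

theorem exists_mem_forall_notMem (hT : NotCoveredBySmall 𝓘 T) {𝓖 : Set (Set X)}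
    (h𝓖 : #𝓖 < 𝔠) : ∃ x ∈ T, ∀ s ∈ 𝓖, s ∈ 𝓘 → x ∉ s := by
  by_contra! h
  refine hT (𝓖 ∩ 𝓘) inter_subset_right ((mk_le_mk_of_subset inter_subset_left).trans_lt h𝓖)
    fun x hx => ?_
  obtain ⟨s, hs, hsI, hxs⟩ := h x hx
  exact ⟨s, ⟨hs, hsI⟩, hxs⟩

theorem exists_mem_notMem_sUnionThrough (hT : NotCoveredBySmall 𝓘 T) {𝓐 : Set (Set X)}
    (hW : univ \ ⋃₀ 𝓐 ∈ 𝓘) (hZ : {x | sUnionThrough 𝓐 x ∉ 𝓘} ∈ 𝓘) {ι : Type u}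
    (hι : #ι < 𝔠) (p : ι → X) :
    ∃ x ∈ T, x ∈ ⋃₀ 𝓐 ∧ sUnionThrough 𝓐 x ∈ 𝓘 ∧
      ∀ i, sUnionThrough 𝓐 (p i) ∈ 𝓘 → x ∉ sUnionThrough 𝓐 (p i) := by
  have hsmall : #({univ \ ⋃₀ 𝓐, {x | sUnionThrough 𝓐 x ∉ 𝓘}} ∪
      range fun i => sUnionThrough 𝓐 (p i) : Set (Set X)) < 𝔠 := by
    refine (Cardinal.mk_union_le _ _).trans_lt
      (Cardinal.add_lt_of_lt aleph0_le_continuum ?_ (Cardinal.mk_range_le.trans_lt ?_))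
    · exact (toFinite _).lt_aleph0.trans_le aleph0_le_continuum
    · simpa using hι
  obtain ⟨x, hxT, hx⟩ := hT.exists_mem_forall_notMem hsmall
  refine ⟨x, hxT, ?_, not_not.1 (hx _ (by simp) hZ), fun i => hx _ (Or.inr ⟨i, rfl⟩)⟩
  by_contra hxA
  exact hx _ (by simp) hW ⟨trivial, hxA⟩

end NotCoveredBySmall

variable {𝓘 : Set (Set X)}

theorem exists_separated_points {J : Type u} (hJ : #J ≤ 𝔠) {T : J → Set X}
    (hT : ∀ j, NotCoveredBySmall 𝓘 (T j)) {𝓐 : Set (Set X)} (hW : univ \ ⋃₀ 𝓐 ∈ 𝓘)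
    (hZ : {x | sUnionThrough 𝓐 x ∉ 𝓘} ∈ 𝓘) :
    ∃ z : J → X, (∀ j, z j ∈ T j ∧ z j ∈ ⋃₀ 𝓐) ∧
      Pairwise fun i j => ∀ A ∈ 𝓐, z i ∈ A → z j ∉ A := by
  obtain ⟨f⟩ : Nonempty (J ↪ (𝔠 : Cardinal.{u}).ord.ToType) := by
    rwa [← Cardinal.le_def, Cardinal.mk_toType, Cardinal.card_ord]
  have predecessors_small (j : J) : #{i // f i < f j} < 𝔠 := by
    refine lt_of_le_of_lt ?_ (by simpa using Cardinal.mk_Iio_lt (f j))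
    exact Cardinal.mk_le_of_injective (f := fun i => (⟨f i.1, i.2⟩ : Iio (f j)))
      fun i i' h => Subtype.ext (f.injective (congrArg Subtype.val h))
  choose F hF using fun j (prev : ∀ i, f i < f j → X) =>
    (hT j).exists_mem_notMem_sUnionThrough hW hZ (predecessors_small j) fun i => prev i.1 i.2
  have hwf : WellFounded fun i j => f i < f j := InvImage.wf f wellFounded_lt
  set z : J → X := hwf.fix F
  have spec (j : J) : z j ∈ T j ∧ z j ∈ ⋃₀ 𝓐 ∧ sUnionThrough 𝓐 (z j) ∈ 𝓘 ∧
      ∀ i : {i // f i < f j}, sUnionThrough 𝓐 (z i) ∈ 𝓘 → z j ∉ sUnionThrough 𝓐 (z i) :=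
    by rw [show z j = F j fun i _ => z i from hwf.fix_eq F j]; exact hF j fun i _ => z i
  have later_avoids (i j : J) (h : f i < f j) (A : Set X) (hA : A ∈ 𝓐) (hi : z i ∈ A) :
      z j ∉ A :=
    fun hj => (spec j).2.2.2 ⟨i, h⟩ (spec i).2.2.1 (subset_sUnionThrough hA hi hj)
  refine ⟨z, fun j => ⟨(spec j).1, (spec j).2.1⟩, fun i j hij A hA hi hj => ?_⟩
  rcases lt_or_gt_of_ne (f.injective.ne hij) with h | h
  · exact later_avoids i j h A hA hi hj
  · exact later_avoids j i h A hA hj hi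

theorem exists_subset_sUnion_inter_nonempty_diff_nonempty {𝓑 : Set (Set X)} (h𝓑 : #𝓑 ≤ 𝔠)
    (hcov : ∀ B ∈ 𝓑, NotCoveredBySmall 𝓘 B) {𝓐 : Set (Set X)} (hW : univ \ ⋃₀ 𝓐 ∈ 𝓘)
    (hZ : {x | sUnionThrough 𝓐 x ∉ 𝓘} ∈ 𝓘) :
    ∃ 𝓐₀ ⊆ 𝓐, ∀ B ∈ 𝓑, (⋃₀ 𝓐₀ ∩ B).Nonempty ∧ (B \ ⋃₀ 𝓐₀).Nonempty := by
  have hJ : #(𝓑 × Bool) ≤ 𝔠 := by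
    simp only [Cardinal.mk_prod, Cardinal.lift_uzero, Cardinal.mk_fintype, Fintype.card_bool,
      Cardinal.lift_natCast]
    calc #𝓑 * (2 : ℕ) ≤ 𝔠 * (2 : ℕ) := by gcongr
      _ = 𝔠 := Cardinal.mul_eq_left aleph0_le_continuum (Cardinal.nat_lt_continuum 2).le (by simp)
  obtain ⟨z, hz, hsep⟩ := exists_separated_points hJ (T := fun j => j.1) (fun j => hcov _ j.1.2)
    hW hZ
  refine ⟨{A | A ∈ 𝓐 ∧ ∃ B : 𝓑, z (B, false) ∈ A}, fun A hA => hA.1, fun B hB => ⟨?_, ?_⟩⟩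
  · obtain ⟨A, hA, hzA⟩ := (hz (⟨B, hB⟩, false)).2
    exact ⟨_, ⟨A, ⟨hA, _, hzA⟩, hzA⟩, (hz (⟨B, hB⟩, false)).1⟩
  · refine ⟨z (⟨B, hB⟩, true), (hz (⟨B, hB⟩, true)).1, ?_⟩
    rintro ⟨A, ⟨hA, B', hB'⟩, hzA⟩
    exact hsep (by simp) A hA hB' hzA

theorem stmt_1_general {X : Type} [TopologicalSpace X] [PolishSpace X]
    [MeasurableSpace X] [BorelSpace X]
    (𝓘 : Set (Set X))
    (hcov : ∀ 𝓖 : Set (Set X), 𝓖 ⊆ 𝓘 → Cardinal.mk ↥𝓖 < Cardinal.continuum →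
      ¬ ∃ B : Set X, MeasurableSet B ∧ B ∉ 𝓘 ∧ B ⊆ ⋃₀ 𝓖)
    (𝓐 : Set (Set X))
    (h1 : univ \ ⋃₀ 𝓐 ∈ 𝓘)
    (h2 : {x : X | ⋃₀ {A | A ∈ 𝓐 ∧ x ∈ A} ∉ 𝓘} ∈ 𝓘) :
    ∃ 𝓐₀ ⊆ 𝓐, ∀ B : Set X, MeasurableSet B → B ∉ 𝓘 →
      (⋃₀ 𝓐₀ ∩ B).Nonempty ∧ (B \ ⋃₀ 𝓐₀).Nonempty := by
  have hpos : #{B : Set X | MeasurableSet B ∧ B ∉ 𝓘} ≤ 𝔠 :=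
    (mk_le_mk_of_subset fun _ hB => hB.1).trans MeasurableSpace.mk_measurableSet_le_continuum
  obtain ⟨𝓐₀, h𝓐₀, h⟩ := exists_subset_sUnion_inter_nonempty_diff_nonempty hpos
    (fun B hB 𝓖 h𝓖 hc hsub => hcov 𝓖 h𝓖 hc ⟨B, hB.1, hB.2, hsub⟩) h1 h2
  exact ⟨𝓐₀, h𝓐₀, fun B hBm hBI => h B ⟨hBm, hBI⟩⟩

theorem stmt_1 {X : Type} [TopologicalSpace X] [PolishSpace X] [Uncountable X]
    [MeasurableSpace X] [BorelSpace X]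
    (𝓘 : Set (Set X))
    (hDown : ∀ A B : Set X, A ⊆ B → B ∈ 𝓘 → A ∈ 𝓘)
    (hUnion : ∀ f : ℕ → Set X, (∀ n, f n ∈ 𝓘) → (⋃ n, f n) ∈ 𝓘)
    (hProper : (univ : Set X) ∉ 𝓘)
    (hSing : ∀ x : X, ({x} : Set X) ∈ 𝓘)
    (hBase : ∀ A ∈ 𝓘, ∃ B : Set X, A ⊆ B ∧ MeasurableSet B ∧ B ∈ 𝓘)
    (hcov : ∀ 𝓖 : Set (Set X), 𝓖 ⊆ 𝓘 → Cardinal.mk ↥𝓖 < Cardinal.continuum →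
      ¬ ∃ B : Set X, MeasurableSet B ∧ B ∉ 𝓘 ∧ B ⊆ ⋃₀ 𝓖)
    (𝓐 : Set (Set X)) (h𝓐 : 𝓐 ⊆ 𝓘)
    (h1 : univ \ ⋃₀ 𝓐 ∈ 𝓘)
    (h2 : {x : X | ⋃₀ {A | A ∈ 𝓐 ∧ x ∈ A} ∉ 𝓘} ∈ 𝓘) :
    ∃ 𝓐₀ ⊆ 𝓐, ∀ B : Set X, MeasurableSet B → B ∉ 𝓘 →
      (⋃₀ 𝓐₀ ∩ B).Nonempty ∧ (B \ ⋃₀ 𝓐₀).Nonempty :=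
  stmt_1_general 𝓘 hcov 𝓐 h1 h2
end

section
/- Let (X, 𝓘) be a Polish ideal space such that every 𝓘-positive Borel set contains an 𝓘-positive closed set, and let 𝓐 be a partition of X into closed sets, each belonging to 𝓘, which is strongly Borel measurable: for every closed set C ⊆ X, the saturation ⋃{A ∈ 𝓐 : A ∩ C ≠ ∅} is Borel. Then for every 𝓘-positive Borel set B, the family {A ∈ 𝓐 : A ∩ B ≠ ∅} has cardinality 2^ℵ₀. -/
/-!
Pass to a complete metric and let `p x` be the piece containing `x`. A positive closed set `F`
has a point `x` all of whose neighbourhoods meet `F` positively (Lindelöf). With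
`G n = closedBall x (1 / (n + 1)) ∩ F`, a point of `F` whose piece meets every `G n` has `x` in
the closure of its piece, hence lies in the null piece `p x`; so some Borel set
`F \ p⁻¹(p(G n))` is positive and contains a positive closed `R`. Thus `G n` and `R` are positive
closed subsets of `F` sharing no piece. Iterating with shrinking diameters gives a Cantor scheme
of positive closed subsets of `B`; its branch points lie in distinct pieces for distinct
branches, so `B` meets at least `2^ℵ₀` pieces, and at most `|X| = 2^ℵ₀`.
-/

open Set Filter Topology Metric Function
open scoped ENNReal

section CantorScheme

variable {α β ι : Type*}

def HasSeparatedSplitting (ι : Type*) [PseudoEMetricSpace α] (f : α → β) (P : Set α → Prop) :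
    Prop :=
  ∀ s, P s → ∀ ε : ℝ≥0∞, 0 < ε → ∃ c : ι → Set α,
    (∀ i, P (c i) ∧ c i ⊆ s ∧ ediam (c i) ≤ ε) ∧ Pairwise (Disjoint on fun i => f '' c i)

theorem exists_cantorScheme_of_split [PseudoEMetricSpace α] (f : α → β) {P : Set α → Prop}
    (hsplit : HasSeparatedSplitting ι f P)
    {C : Set α} (hC : P C) :
    ∃ D : List ι → Set α, D [] = C ∧ (∀ l, P (D l)) ∧ CantorScheme.Antitone D ∧
      (∀ l, ediam (D l) ≤ (l.length : ℝ≥0∞)⁻¹) ∧ CantorScheme.Disjoint fun l => f '' D l := by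
  choose c hc hdisj using hsplit
  have hε (n : ℕ) : (0 : ℝ≥0∞) < ((n + 1 : ℕ) : ℝ≥0∞)⁻¹ :=
    ENNReal.inv_pos.2 (ENNReal.natCast_ne_top _)
  let D : List ι → {s // P s} := fun l =>
    l.rec ⟨C, hC⟩ fun i l s => ⟨c s.1 s.2 _ (hε l.length) i, (hc ..).1⟩
  refine ⟨fun l => (D l).1, rfl, fun l => (D l).2, fun l i => (hc ..).2.1, ?_,
    fun l => hdisj ..⟩
  rintro (_ | ⟨i, l⟩)
  · simp -- the bound at the root is `0⁻¹ = ⊤`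
  · exact (hc ..).2.2

open CantorScheme in
theorem exists_injective_of_split [PseudoMetricSpace α] [CompleteSpace α] (f : α → β)
    {P : Set α → Prop} (hclosed : ∀ s, P s → IsClosed s) (hne : ∀ s, P s → s.Nonempty)
    (hsplit : HasSeparatedSplitting ι f P)
    {C : Set α} (hC : P C) : ∃ g : (ℕ → ι) → β, Injective g ∧ range g ⊆ f '' C := by
  obtain ⟨D, hD, hP, hanti, hdiam, hdisj⟩ := exists_cantorScheme_of_split f hsplit hC
  have hvanish : VanishingDiam D := fun x =>
    tendsto_of_tendsto_of_tendsto_of_le_of_le tendsto_const_nhds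
      ENNReal.tendsto_inv_nat_nhds_zero (fun _ => zero_le)
      fun n => by simpa [PiNat.res_length] using hdiam (PiNat.res x n)
  have hdomD := (hanti.closureAntitone fun l => hclosed _ (hP l)).map_of_vanishingDiam hvanish
    fun l => hne _ (hP l)
  -- The images `f '' D l` form a disjoint scheme on `β`; its branches are nonempty since
  -- they contain the images of the branch points of `D`.
  have hdom (x : ℕ → ι) : x ∈ (inducedMap fun l => f '' D l).1 :=
    ⟨f ((inducedMap D).2 ⟨x, hdomD ▸ mem_univ x⟩),
      mem_iInter.2 fun n => mem_image_of_mem f (map_mem _ n)⟩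
  refine ⟨fun x => (inducedMap _).2 ⟨x, hdom x⟩, fun x y hxy => ?_, ?_⟩
  · exact congrArg Subtype.val (hdisj.map_injective hxy)
  · rintro _ ⟨x, rfl⟩
    simpa [hD] using map_mem ⟨x, hdom x⟩ 0

end CantorScheme

structure IsSigmaIdeal {X : Type*} (𝓘 : Set (Set X)) : Prop where
  mono : ∀ ⦃s t : Set X⦄, s ⊆ t → t ∈ 𝓘 → s ∈ 𝓘
  sUnion_mem : ∀ S : Set (Set X), S.Countable → (∀ s ∈ S, s ∈ 𝓘) → ⋃₀ S ∈ 𝓘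

namespace IsSigmaIdeal

variable {X : Type*} {𝓘 : Set (Set X)}

theorem of_iUnion_nat_mem (hempty : ∅ ∈ 𝓘) (hmono : ∀ s t : Set X, s ⊆ t → t ∈ 𝓘 → s ∈ 𝓘)
    (hUnion : ∀ f : ℕ → Set X, (∀ n, f n ∈ 𝓘) → (⋃ n, f n) ∈ 𝓘) : IsSigmaIdeal 𝓘 where
  mono := hmono
  sUnion_mem S hS h𝓘 := by
    rcases S.eq_empty_or_nonempty with rfl | hne
    · rwa [sUnion_empty]
    · obtain ⟨f, rfl⟩ := hS.exists_eq_range hne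
      rw [sUnion_range]
      exact hUnion f fun n => h𝓘 _ (mem_range_self n)

theorem empty_mem (h : IsSigmaIdeal 𝓘) : ∅ ∈ 𝓘 := by
  simpa using h.sUnion_mem ∅ countable_empty (by simp)

theorem nonempty_of_notMem (h : IsSigmaIdeal 𝓘) {s : Set X} (hs : s ∉ 𝓘) : s.Nonempty :=
  nonempty_iff_ne_empty.2 fun h' => hs (h' ▸ h.empty_mem)

theorem iUnion_mem (h : IsSigmaIdeal 𝓘) {ι : Sort*} [Countable ι] {f : ι → Set X}
    (hf : ∀ i, f i ∈ 𝓘) : ⋃ i, f i ∈ 𝓘 := by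
  rw [← sUnion_range]
  exact h.sUnion_mem _ (countable_range f) (forall_mem_range.2 hf)

theorem union_mem (h : IsSigmaIdeal 𝓘) {s t : Set X} (hs : s ∈ 𝓘) (ht : t ∈ 𝓘) :
    s ∪ t ∈ 𝓘 := by
  rw [← sUnion_pair]
  exact h.sUnion_mem _ ((countable_singleton t).insert s) (by simp [hs, ht])

theorem exists_mem_forall_mem_nhds_inter_notMem (h : IsSigmaIdeal 𝓘) [TopologicalSpace X]
    [HereditarilyLindelofSpace X] {s : Set X} (hs : s ∉ 𝓘) :
    ∃ x ∈ s, ∀ U ∈ 𝓝 x, U ∩ s ∉ 𝓘 := by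
  let l := Filter.ofCountableUnion 𝓘 h.sUnion_mem fun t ht s hst => h.mono hst ht
  have : (l ⊓ 𝓟 s).NeBot := inf_principal_neBot_iff.2 fun U hU =>
    h.nonempty_of_notMem fun hUs => hs <| h.mono (fun x hx => by by_cases x ∈ U <;> simp [*])
      (h.union_mem hU hUs)
  obtain ⟨x, hxs, hx⟩ := HereditarilyLindelofSpace.isLindelof s (f := l ⊓ 𝓟 s) inf_le_right
  refine ⟨x, hxs, fun U hU hUs => ?_⟩
  obtain ⟨y, hyU, hy⟩ := clusterPt_iff_nonempty.1 hx hU (inter_mem_inf (s := (U ∩ s)ᶜ)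
    (by simpa [l] using hUs) (mem_principal_self s))
  exact hy.1 ⟨hyU, hy.2⟩

theorem exists_subset_ediam_le [PseudoEMetricSpace X] [HereditarilyLindelofSpace X]
    (h : IsSigmaIdeal 𝓘) {F : Set X} (hF : IsClosed F) (hFpos : F ∉ 𝓘) {ε : ℝ≥0∞}
    (hε : 0 < ε) : ∃ F' ⊆ F, IsClosed F' ∧ F' ∉ 𝓘 ∧ ediam F' ≤ ε := by
  obtain ⟨x, -, hx⟩ := h.exists_mem_forall_mem_nhds_inter_notMem hFpos
  refine ⟨closedEBall x (ε / 2) ∩ F, inter_subset_right, isClosed_closedEBall.inter hF,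
    hx _ (closedEBall_mem_nhds x (ENNReal.half_pos hε.ne')), ?_⟩
  calc ediam (closedEBall x (ε / 2) ∩ F) ≤ 2 * (ε / 2) :=
        (ediam_mono inter_subset_left).trans ediam_closedEBall_le
    _ = ε := ENNReal.mul_div_cancel two_ne_zero ENNReal.ofNat_ne_top

variable {p : X → Set X}

theorem exists_disjoint_image_of_isClosed [PseudoMetricSpace X] [SecondCountableTopology X]
    [MeasurableSpace X] [OpensMeasurableSpace X] (h : IsSigmaIdeal 𝓘)
    (hclosed_inner : ∀ B, MeasurableSet B → B ∉ 𝓘 → ∃ F, IsClosed F ∧ F ∉ 𝓘 ∧ F ⊆ B)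
    (hp_mem : ∀ x, x ∈ p x) (hp_eq : ∀ x y, x ∈ p y → p x = p y)
    (hp_closed : ∀ x, IsClosed (p x)) (hp_null : ∀ x, p x ∈ 𝓘)
    (hp_sat : ∀ C, IsClosed C → MeasurableSet (p ⁻¹' (p '' C)))
    {F : Set X} (hF : IsClosed F) (hFpos : F ∉ 𝓘) :
    ∃ Q ⊆ F, IsClosed Q ∧ Q ∉ 𝓘 ∧ ∃ R ⊆ F, IsClosed R ∧ R ∉ 𝓘 ∧
      Disjoint (p '' Q) (p '' R) := by
  obtain ⟨x, -, hx⟩ := h.exists_mem_forall_mem_nhds_inter_notMem hFpos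
  have hbasis := nhds_basis_closedBall_inv_nat_succ (x := x)
  set G : ℕ → Set X := fun n => closedBall x (1 / (n + 1)) ∩ F
  have hcover : F ⊆ (⋃ n, F \ p ⁻¹' (p '' G n)) ∪ p x := by
    intro y hy
    refine or_iff_not_imp_left.2 fun hy' => ?_
    have hxy : x ∈ closure (p y) := (mem_closure_iff_nhds_basis hbasis).2 fun n _ => by
      obtain ⟨z, hz, hzy⟩ : y ∈ p ⁻¹' (p '' G n) :=
        not_not.1 fun hyn => hy' ⟨_, ⟨n, rfl⟩, hy, hyn⟩
      exact ⟨z, hzy ▸ hp_mem z, hz.1⟩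
    rw [(hp_closed y).closure_eq] at hxy
    exact hp_eq x y hxy ▸ hp_mem y
  obtain ⟨n, hn⟩ : ∃ n, F \ p ⁻¹' (p '' G n) ∉ 𝓘 := by
    by_contra! hall
    exact hFpos (h.mono hcover (h.union_mem (h.iUnion_mem hall) (hp_null x)))
  obtain ⟨R, hR, hRpos, hRF⟩ :=
    hclosed_inner _ (hF.measurableSet.diff (hp_sat _ (isClosed_closedBall.inter hF))) hn
  refine ⟨G n, inter_subset_right, isClosed_closedBall.inter hF,
    hx _ (hbasis.mem_of_mem trivial), R, fun y hy => (hRF hy).1, hR, hRpos, ?_⟩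
  rw [disjoint_left]
  rintro _ ⟨q, hq, rfl⟩ ⟨r, hr, hrq⟩
  exact (hRF hr).2 ⟨q, hq, hrq.symm⟩

theorem hasSeparatedSplitting [PseudoMetricSpace X] [SecondCountableTopology X]
    [MeasurableSpace X] [OpensMeasurableSpace X] (h : IsSigmaIdeal 𝓘)
    (hclosed_inner : ∀ B, MeasurableSet B → B ∉ 𝓘 → ∃ F, IsClosed F ∧ F ∉ 𝓘 ∧ F ⊆ B)
    (hp_mem : ∀ x, x ∈ p x) (hp_eq : ∀ x y, x ∈ p y → p x = p y)
    (hp_closed : ∀ x, IsClosed (p x)) (hp_null : ∀ x, p x ∈ 𝓘)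
    (hp_sat : ∀ C, IsClosed C → MeasurableSet (p ⁻¹' (p '' C))) :
    HasSeparatedSplitting Bool p fun F => IsClosed F ∧ F ∉ 𝓘 := by
  intro F hF ε hε
  obtain ⟨Q, hQF, hQ, hQpos, R, hRF, hR, hRpos, hQR⟩ :=
    h.exists_disjoint_image_of_isClosed hclosed_inner hp_mem hp_eq hp_closed hp_null hp_sat
      hF.1 hF.2
  obtain ⟨Q', hQ'Q, hQ', hQ'pos, hQ'ε⟩ := h.exists_subset_ediam_le hQ hQpos hε
  obtain ⟨R', hR'R, hR', hR'pos, hR'ε⟩ := h.exists_subset_ediam_le hR hRpos hε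
  refine ⟨fun b => cond b R' Q', Bool.forall_bool.2 ⟨⟨⟨hQ', hQ'pos⟩, hQ'Q.trans hQF, hQ'ε⟩,
    ⟨⟨hR', hR'pos⟩, hR'R.trans hRF, hR'ε⟩⟩, ?_⟩
  have : Disjoint (p '' R') (p '' Q') :=
    (hQR.mono (image_mono hQ'Q) (image_mono hR'R)).symm
  convert pairwise_disjoint_on_bool.2 this using 2
  funext b
  cases b <;> rfl

end IsSigmaIdeal

section Partition

variable {X : Type*} {𝓐 : Set (Set X)} {p : X → Set X}

theorem eq_of_mem_of_pairwiseDisjoint (hdisj : ∀ A ∈ 𝓐, ∀ A' ∈ 𝓐, A ≠ A' → Disjoint A A')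
    {A A' : Set X} (hA : A ∈ 𝓐) (hA' : A' ∈ 𝓐) {x : X} (hxA : x ∈ A) (hxA' : x ∈ A') :
    A = A' :=
  not_not.1 fun hne => disjoint_left.1 (hdisj A hA A' hA' hne) hxA hxA'

theorem setOf_inter_nonempty_eq_image (hp : ∀ x, p x ∈ 𝓐) (hp_mem : ∀ x, x ∈ p x)
    (hp_unique : ∀ A ∈ 𝓐, ∀ x ∈ A, A = p x) (C : Set X) :
    {A | A ∈ 𝓐 ∧ (A ∩ C).Nonempty} = p '' C := by
  ext A
  constructor
  · rintro ⟨hA, x, hxA, hxC⟩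
    exact ⟨x, hxC, (hp_unique A hA x hxA).symm⟩
  · rintro ⟨x, hxC, rfl⟩
    exact ⟨hp x, x, hp_mem x, hxC⟩

theorem sUnion_setOf_inter_nonempty_eq_preimage_image (hp : ∀ x, p x ∈ 𝓐)
    (hp_mem : ∀ x, x ∈ p x) (hp_unique : ∀ A ∈ 𝓐, ∀ x ∈ A, A = p x) (C : Set X) :
    ⋃₀ {A | A ∈ 𝓐 ∧ (A ∩ C).Nonempty} = p ⁻¹' (p '' C) := by
  rw [setOf_inter_nonempty_eq_image hp hp_mem hp_unique]
  ext y
  constructor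
  · rintro ⟨_, ⟨x, hxC, rfl⟩, hy⟩
    exact ⟨x, hxC, hp_unique _ (hp x) y hy⟩
  · rintro ⟨x, hxC, hxy⟩
    exact ⟨p y, ⟨x, hxC, hxy⟩, hp_mem y⟩

end Partition

theorem stmt_4_general {X : Type} [TopologicalSpace X] [PolishSpace X] [Uncountable X]
    [MeasurableSpace X] [BorelSpace X]
    (𝓘 : Set (Set X))
    (hDown : ∀ A B : Set X, A ⊆ B → B ∈ 𝓘 → A ∈ 𝓘)
    (hUnion : ∀ f : ℕ → Set X, (∀ n, f n ∈ 𝓘) → (⋃ n, f n) ∈ 𝓘)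
    (hSing : ∀ x : X, ({x} : Set X) ∈ 𝓘)
    (hClosedBase : ∀ B : Set X, MeasurableSet B → B ∉ 𝓘 →
      ∃ F : Set X, IsClosed F ∧ F ∉ 𝓘 ∧ F ⊆ B)
    (𝓐 : Set (Set X))
    (hcover : ⋃₀ 𝓐 = univ)
    (hdisj : ∀ A ∈ 𝓐, ∀ A' ∈ 𝓐, A ≠ A' → Disjoint A A')
    (hclosed : ∀ A ∈ 𝓐, IsClosed A)
    (hnull : ∀ A ∈ 𝓐, A ∈ 𝓘)
    (hsbm : ∀ C : Set X, IsClosed C →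
      MeasurableSet (⋃₀ {A | A ∈ 𝓐 ∧ (A ∩ C).Nonempty})) :
    ∀ B : Set X, MeasurableSet B → B ∉ 𝓘 →
      Cardinal.mk ↥{A | A ∈ 𝓐 ∧ (A ∩ B).Nonempty} = Cardinal.continuum := by
  intro B hB hBpos
  let := TopologicalSpace.upgradeIsCompletelyMetrizable X
  have h𝓘 : IsSigmaIdeal 𝓘 :=
    .of_iUnion_nat_mem (hDown ∅ _ (empty_subset _) (hSing (Classical.arbitrary X))) hDown hUnion
  choose p hp hp_mem using fun x => mem_sUnion.1 (hcover.symm ▸ mem_univ x : x ∈ ⋃₀ 𝓐)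
  have hp_unique (A) (hA : A ∈ 𝓐) (x) (hx : x ∈ A) : A = p x :=
    eq_of_mem_of_pairwiseDisjoint hdisj hA (hp x) hx (hp_mem x)
  have hp_eq (x y) (hx : x ∈ p y) : p x = p y := (hp_unique _ (hp y) x hx).symm
  obtain ⟨F, hF, hFpos, hFB⟩ := hClosedBase B hB hBpos
  obtain ⟨g, hg, hgF⟩ := exists_injective_of_split p
    (fun _ hs => hs.1) (fun _ hs => h𝓘.nonempty_of_notMem hs.2)
    (h𝓘.hasSeparatedSplitting hClosedBase hp_mem hp_eq (fun x => hclosed _ (hp x))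
      (fun x => hnull _ (hp x)) fun C hC =>
        sUnion_setOf_inter_nonempty_eq_preimage_image hp hp_mem hp_unique C ▸ hsbm C hC)
    ⟨hF, hFpos⟩
  have hcantor : Cardinal.mk (ℕ → Bool) = Cardinal.continuum := by
    simp [Cardinal.two_power_aleph0]
  rw [setOf_inter_nonempty_eq_image hp hp_mem hp_unique, ← hcantor]
  refine le_antisymm ?_ ?_
  · calc Cardinal.mk (p '' B) ≤ Cardinal.mk X :=
          Cardinal.mk_image_le.trans (Cardinal.mk_set_le B)
      _ = Cardinal.mk (ℕ → Bool) :=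
        Cardinal.mk_congr (PolishSpace.measurableEquivNatBoolOfNotCountable not_countable).toEquiv
  · calc Cardinal.mk (ℕ → Bool) = Cardinal.mk (range g) := (Cardinal.mk_range_eq g hg).symm
      _ ≤ Cardinal.mk (p '' B) := Cardinal.mk_le_mk_of_subset (hgF.trans (image_mono hFB))

theorem stmt_4 {X : Type} [TopologicalSpace X] [PolishSpace X] [Uncountable X]
    [MeasurableSpace X] [BorelSpace X]
    (𝓘 : Set (Set X))
    (hDown : ∀ A B : Set X, A ⊆ B → B ∈ 𝓘 → A ∈ 𝓘)
    (hUnion : ∀ f : ℕ → Set X, (∀ n, f n ∈ 𝓘) → (⋃ n, f n) ∈ 𝓘)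
    (hProper : (univ : Set X) ∉ 𝓘)
    (hSing : ∀ x : X, ({x} : Set X) ∈ 𝓘)
    (hBase : ∀ A ∈ 𝓘, ∃ B : Set X, A ⊆ B ∧ MeasurableSet B ∧ B ∈ 𝓘)
    (hClosedBase : ∀ B : Set X, MeasurableSet B → B ∉ 𝓘 →
      ∃ F : Set X, IsClosed F ∧ F ∉ 𝓘 ∧ F ⊆ B)
    (𝓐 : Set (Set X))
    (hcover : ⋃₀ 𝓐 = univ)
    (hdisj : ∀ A ∈ 𝓐, ∀ A' ∈ 𝓐, A ≠ A' → Disjoint A A')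
    (hne : ∀ A ∈ 𝓐, A.Nonempty)
    (hclosed : ∀ A ∈ 𝓐, IsClosed A)
    (hnull : ∀ A ∈ 𝓐, A ∈ 𝓘)
    (hsbm : ∀ C : Set X, IsClosed C →
      MeasurableSet (⋃₀ {A | A ∈ 𝓐 ∧ (A ∩ C).Nonempty})) :
    ∀ B : Set X, MeasurableSet B → B ∉ 𝓘 →
      Cardinal.mk ↥{A | A ∈ 𝓐 ∧ (A ∩ B).Nonempty} = Cardinal.continuum :=
  stmt_4_general 𝓘 hDown hUnion hSing hClosedBase 𝓐 hcover hdisj hclosed hnull hsbm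
end

section
/- Let G be an uncountable compact Polish abelian topological group and let 𝓘 be a σ-ideal making (G, 𝓘) a Polish ideal space, with 𝓘 closed under translations (A ∈ 𝓘 implies g + A ∈ 𝓘 for every g ∈ G). Assume every 𝓘-positive Borel set contains an 𝓘-positive closed set. Let H be a subgroup of G which is a perfect subset of G (closed, nonempty, without isolated points) and H ∈ 𝓘. Then there exists a set T ⊆ G such that T + H is completely 𝓘-nonmeasurable in G. -/
/-!
Every coset of `H` lies in `𝓘`, so an `𝓘`-positive closed set `F` meets uncountably many cosets:
its image in the compact metrizable group `G ⧸ H` is an uncountable closed set, of cardinality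
at least `𝔠`. There are at most `𝔠` closed sets, so a Bernstein-type transfinite construction
yields `S ⊆ G ⧸ H` that meets, and misses a point of, the image of every such `F`. Its preimage
`T` satisfies `T + H = T` and splits every `𝓘`-positive Borel set, since these contain
`𝓘`-positive closed sets.
-/

open Set Pointwise Cardinal MeasureTheory

universe u

def Splits {X : Type*} (S A : Set X) : Prop :=
  (S ∩ A).Nonempty ∧ (A \ S).Nonempty

theorem Splits.mono {X : Type*} {S A B : Set X} (h : Splits S A) (hAB : A ⊆ B) : Splits S B :=
  ⟨h.1.mono (inter_subset_inter_right S hAB), h.2.mono (sdiff_subset_sdiff_left hAB)⟩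

theorem Splits.preimage {X Y : Type*} {f : X → Y} {S : Set Y} {A : Set X}
    (h : Splits S (f '' A)) : Splits (f ⁻¹' S) A := by
  obtain ⟨⟨_, hyS, x, hxA, rfl⟩, ⟨_, ⟨x', hx'A, rfl⟩, hx'S⟩⟩ := h
  exact ⟨⟨x, hyS, hxA⟩, ⟨x', hx'A, hx'S⟩⟩

theorem exists_splits_of_mk_Iio_lt {X I : Type u} [LinearOrder I] [WellFoundedLT I]
    {κ : Cardinal.{u}} (hκ : ℵ₀ ≤ κ) (hI : ∀ i : I, #(Iio i) < κ)
    (A : I → Set X) (hA : ∀ i, κ ≤ #(A i)) : ∃ S : Set X, ∀ i, Splits S (A i) := by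
  have hpick : ∀ i (P : Set X), ∃ x, #P < κ → x ∈ A i ∧ x ∉ P := by
    intro i P
    by_cases hP : #P < κ
    · obtain ⟨x, hxA, hxP⟩ := not_subset.mp fun h ↦
        (hP.trans_le (hA i)).not_ge (mk_le_mk_of_subset h)
      exact ⟨x, fun _ ↦ ⟨hxA, hxP⟩⟩
    · have : Nonempty (A i) :=
        mk_ne_zero_iff.mp ((aleph0_pos.trans_le (hκ.trans (hA i))).ne')
      exact ⟨this.some, fun h ↦ absurd h hP⟩
  choose pick hpick using hpick
  -- at stage `i`, choose two new points of `A i`: the first goes into `S`, the second stays out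
  let step (i : I) (g : Iio i → X × X) : X × X :=
    let P := range (Prod.fst ∘ g) ∪ range (Prod.snd ∘ g)
    (pick i P, pick i (insert (pick i P) P))
  obtain ⟨f, hf⟩ : ∃ f : I → X × X, ∀ i, f i = step i fun j ↦ f j :=
    ⟨wellFounded_lt.fix fun i prev ↦ step i fun j ↦ prev j j.2,
      fun i ↦ wellFounded_lt.fix_eq _ i⟩
  set P : I → Set X := fun i ↦ range (fun j : Iio i ↦ (f j).1) ∪ range (fun j : Iio i ↦ (f j).2)
  have hP : ∀ i, #(P i) < κ := fun i ↦
    (mk_union_le _ _).trans_lt <| add_lt_of_lt hκ (mk_range_le.trans_lt (hI i))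
      (mk_range_le.trans_lt (hI i))
  have hP' : ∀ i, #(insert (f i).1 (P i) : Set X) < κ := fun i ↦
    mk_insert_le.trans_lt <| add_lt_of_lt hκ (hP i) (one_lt_aleph0.trans_le hκ)
  have hfst : ∀ i, (f i).1 ∈ A i ∧ (f i).1 ∉ P i := fun i ↦ by
    rw [hf i]; exact hpick i _ (hP i)
  have hsnd : ∀ i, (f i).2 ∈ A i ∧ (f i).2 ∉ insert (f i).1 (P i) := fun i ↦ by
    have := hP' i
    rw [hf i] at this ⊢; exact hpick i _ this
  refine ⟨range fun i ↦ (f i).1, fun i ↦ ⟨⟨_, ⟨i, rfl⟩, (hfst i).1⟩, ⟨_, (hsnd i).1, ?_⟩⟩⟩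
  rintro ⟨j, hj⟩
  rcases lt_trichotomy j i with hji | rfl | hij
  · exact (hsnd i).2 (mem_insert_of_mem _ (Or.inl ⟨⟨j, hji⟩, hj⟩))
  · exact (hsnd j).2 (hj ▸ mem_insert _ _)
  · exact (hfst j).2 (Or.inr ⟨⟨i, hij⟩, hj.symm⟩)

theorem exists_splits {X ι : Type u} {κ : Cardinal.{u}} (hκ : ℵ₀ ≤ κ) (hι : #ι ≤ κ)
    (A : ι → Set X) (hA : ∀ i, κ ≤ #(A i)) : ∃ S : Set X, ∀ i, Splits S (A i) := by
  obtain ⟨e⟩ : Nonempty ((#ι).ord.ToType ≃ ι) := Cardinal.eq.mp (by simp)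
  obtain ⟨S, hS⟩ := exists_splits_of_mk_Iio_lt hκ
    (fun j ↦ (by simpa using mk_Iio_lt j : #(Iio j) < #ι).trans_le hι) (A ∘ e) (fun j ↦ hA (e j))
  exact ⟨S, fun i ↦ by simpa using hS (e.symm i)⟩

theorem continuum_le_mk_of_isClosed_of_not_countable {X : Type u} [TopologicalSpace X]
    [PolishSpace X] {s : Set X} (hs : IsClosed s) (hsc : ¬ s.Countable) : 𝔠 ≤ #s := by
  obtain ⟨g, hgs, -, hg⟩ := hs.exists_nat_bool_injection_of_not_countable hsc
  simpa using lift_mk_le_lift_mk_of_injective (f := fun a ↦ (⟨g a, hgs ⟨a, rfl⟩⟩ : s))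
    fun a b hab ↦ hg (congrArg Subtype.val hab)

theorem mk_setOf_isClosed_le_continuum (X : Type u) [TopologicalSpace X]
    [SecondCountableTopology X] : #{s : Set X | IsClosed s} ≤ 𝔠 := by
  obtain ⟨b, hbc, -, hb⟩ := TopologicalSpace.exists_countable_basis X
  have hclosed : {s : Set X | IsClosed s} ⊆ {t | MeasurableSet[.generateFrom b] t} :=
    fun s (hs : IsClosed s) ↦ by
      change MeasurableSet[.generateFrom b] s
      rw [← hb.borel_eq_generateFrom]
      exact (MeasurableSpace.measurableSet_generateFrom hs.isOpen_compl).of_compl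
  exact (mk_le_mk_of_subset hclosed).trans <| MeasurableSpace.cardinal_measurableSet_le_continuum
    ((mk_le_aleph0_iff.mpr hbc.to_subtype).trans aleph0_le_continuum)

namespace QuotientAddGroup

variable {G : Type*} [AddCommGroup G] (H : AddSubgroup G)

theorem preimage_mk_singleton_mk (x : G) :
    mk ⁻¹' {(x : G ⧸ H)} = (x + ·) '' (H : Set G) := by
  rw [← image_singleton, preimage_image_mk_eq_add, singleton_add]

theorem preimage_mk_add (S : Set (G ⧸ H)) : mk ⁻¹' S + (H : Set G) = mk ⁻¹' S := by
  rw [← preimage_image_mk_eq_add, image_preimage_eq S mk_surjective]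

theorem preimage_mk_mem_of_countable (𝓘 : Set (Set G))
    (hDown : ∀ A B : Set G, A ⊆ B → B ∈ 𝓘 → A ∈ 𝓘)
    (hUnion : ∀ f : ℕ → Set G, (∀ n, f n ∈ 𝓘) → (⋃ n, f n) ∈ 𝓘)
    (hTrans : ∀ (g : G), ∀ A ∈ 𝓘, (fun x => g + x) '' A ∈ 𝓘) (hH : (H : Set G) ∈ 𝓘)
    {C : Set (G ⧸ H)} (hC : C.Countable) : mk ⁻¹' C ∈ 𝓘 := by
  obtain ⟨f, hCf⟩ := countable_iff_exists_subset_range.mp hC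
  have hcover : mk ⁻¹' C ⊆ ⋃ n, mk ⁻¹' {f n} := by
    rw [← preimage_iUnion, iUnion_singleton_eq_range]
    exact preimage_mono hCf
  refine hDown _ _ hcover (hUnion _ fun n ↦ ?_)
  obtain ⟨x, hx⟩ := mk_surjective (f n)
  rw [← hx, preimage_mk_singleton_mk]
  exact hTrans x _ hH

theorem polishSpace_of_compactSpace {G : Type*} [TopologicalSpace G] [PolishSpace G]
    [CompactSpace G] [AddCommGroup G] [IsTopologicalAddGroup G] (H : AddSubgroup G)
    [IsClosed (H : Set G)] : PolishSpace (G ⧸ H) := by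
  let _ : MetricSpace (G ⧸ H) := TopologicalSpace.metrizableSpaceMetric _
  infer_instance

theorem continuum_le_mk_image_mk {G : Type*} [TopologicalSpace G] [PolishSpace G]
    [CompactSpace G] [AddCommGroup G] [IsTopologicalAddGroup G] (H : AddSubgroup G)
    [IsClosed (H : Set G)] (𝓘 : Set (Set G))
    (hDown : ∀ A B : Set G, A ⊆ B → B ∈ 𝓘 → A ∈ 𝓘)
    (hUnion : ∀ f : ℕ → Set G, (∀ n, f n ∈ 𝓘) → (⋃ n, f n) ∈ 𝓘)
    (hTrans : ∀ (g : G), ∀ A ∈ 𝓘, (fun x => g + x) '' A ∈ 𝓘) (hH : (H : Set G) ∈ 𝓘)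
    {F : Set G} (hF : IsClosed F) (hFI : F ∉ 𝓘) : 𝔠 ≤ #(mk '' F : Set (G ⧸ H)) := by
  have := polishSpace_of_compactSpace H
  refine continuum_le_mk_of_isClosed_of_not_countable
    (hF.isCompact.image continuous_mk).isClosed fun hcount ↦ hFI ?_
  exact hDown _ _ (subset_preimage_image _ _)
    (preimage_mk_mem_of_countable H 𝓘 hDown hUnion hTrans hH hcount)

end QuotientAddGroup

theorem stmt_5_general {G : Type} [TopologicalSpace G] [PolishSpace G] [CompactSpace G]
    [AddCommGroup G] [IsTopologicalAddGroup G]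
    [MeasurableSpace G]
    (𝓘 : Set (Set G))
    (hDown : ∀ A B : Set G, A ⊆ B → B ∈ 𝓘 → A ∈ 𝓘)
    (hUnion : ∀ f : ℕ → Set G, (∀ n, f n ∈ 𝓘) → (⋃ n, f n) ∈ 𝓘)
    (hTrans : ∀ (g : G), ∀ A ∈ 𝓘, (fun x => g + x) '' A ∈ 𝓘)
    (hClosedBase : ∀ B : Set G, MeasurableSet B → B ∉ 𝓘 →
      ∃ F : Set G, IsClosed F ∧ F ∉ 𝓘 ∧ F ⊆ B)
    (H : AddSubgroup G) (hPerf : Perfect (H : Set G)) (hH : (H : Set G) ∈ 𝓘) :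
    ∃ T : Set G, ∀ B : Set G, MeasurableSet B → B ∉ 𝓘 →
      ((T + (H : Set G)) ∩ B).Nonempty ∧ (B \ (T + (H : Set G))).Nonempty := by
  have : IsClosed (H : Set G) := hPerf.closed
  let 𝒞 : Set (Set G) := {F | IsClosed F ∧ F ∉ 𝓘}
  have h𝒞 : #𝒞 ≤ 𝔠 :=
    (mk_le_mk_of_subset fun _ hF ↦ hF.1).trans (mk_setOf_isClosed_le_continuum G)
  obtain ⟨S, hS⟩ := exists_splits aleph0_le_continuum h𝒞
    (fun F : 𝒞 ↦ (QuotientAddGroup.mk '' (F : Set G) : Set (G ⧸ H)))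
    fun F ↦ QuotientAddGroup.continuum_le_mk_image_mk H 𝓘 hDown hUnion hTrans hH F.2.1 F.2.2
  refine ⟨QuotientAddGroup.mk ⁻¹' S, fun B hB hBI ↦ ?_⟩
  obtain ⟨F, hF, hFI, hFB⟩ := hClosedBase B hB hBI
  rw [QuotientAddGroup.preimage_mk_add]
  exact (hS ⟨F, hF, hFI⟩).preimage.mono hFB

theorem stmt_5 {G : Type} [TopologicalSpace G] [PolishSpace G] [CompactSpace G]
    [Uncountable G] [AddCommGroup G] [IsTopologicalAddGroup G]
    [MeasurableSpace G] [BorelSpace G]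
    (𝓘 : Set (Set G))
    (hDown : ∀ A B : Set G, A ⊆ B → B ∈ 𝓘 → A ∈ 𝓘)
    (hUnion : ∀ f : ℕ → Set G, (∀ n, f n ∈ 𝓘) → (⋃ n, f n) ∈ 𝓘)
    (hProper : (univ : Set G) ∉ 𝓘)
    (hSing : ∀ x : G, ({x} : Set G) ∈ 𝓘)
    (hBase : ∀ A ∈ 𝓘, ∃ B : Set G, A ⊆ B ∧ MeasurableSet B ∧ B ∈ 𝓘)
    (hTrans : ∀ (g : G), ∀ A ∈ 𝓘, (fun x => g + x) '' A ∈ 𝓘)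
    (hClosedBase : ∀ B : Set G, MeasurableSet B → B ∉ 𝓘 →
      ∃ F : Set G, IsClosed F ∧ F ∉ 𝓘 ∧ F ⊆ B)
    (H : AddSubgroup G) (hPerf : Perfect (H : Set G)) (hH : (H : Set G) ∈ 𝓘) :
    ∃ T : Set G, ∀ B : Set G, MeasurableSet B → B ∉ 𝓘 →
      ((T + (H : Set G)) ∩ B).Nonempty ∧ (B \ (T + (H : Set G))).Nonempty :=
  stmt_5_general 𝓘 hDown hUnion hTrans hClosedBase H hPerf hH
end

section
/- Let (X, 𝓘) be a Polish ideal space with 𝓘 c.c.c., let Y be a Polish space, and let I ∈ 𝓘. Suppose f : X ∖ I → Y is Borel measurable (with respect to the subspace Borel structure on X ∖ I) and f⁻¹({y}) ∈ 𝓘 for every y ∈ Y. Then there exists a set T ⊆ Y such that f⁻¹(T) is a completely 𝓘-nonmeasurable subset of X. -/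
/-!
Removing from an `𝓘`-positive Borel set `B` a Borel `𝓘`-set `J ⊇ I` leaves a positive Borel set
`B \ J` on which `f` is Borel, and since the fibres of `f` lie in the σ-ideal its image is
uncountable. An uncountable Borel image of a standard Borel space has size continuum: after
refining the topology `f` becomes continuous, and a Cantor scheme through the points all of whose
neighbourhoods have uncountable image embeds the Cantor space into it. As there are at most
continuum many Borel sets, a transfinite Bernstein construction of length `𝔠` gives `T ⊆ Y`
meeting each of these images as well as their complements.
-/

universe u

open Set Function Filter CantorScheme PiNat
open scoped Cardinal ENNReal

theorem CantorScheme.injective_comp_map {β α γ : Type*} {A : List β → Set α} {g : α → γ}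
    (hA : CantorScheme.Disjoint fun l => g '' A l) : Injective (g ∘ (inducedMap A).2) := by
  intro x y hxy
  ext1
  apply res_injective
  ext n : 1
  induction n with
  | zero => rfl
  | succ n ih =>
    simp only [res_succ, List.cons.injEq]
    refine ⟨by_contra fun hne => (hA (res x n) hne).ne_of_mem ?_ ?_ hxy, ih⟩
    · exact mem_image_of_mem g (res_succ (x : ℕ → β) n ▸ map_mem x (n + 1))
    · rw [ih]
      exact mem_image_of_mem g (res_succ (y : ℕ → β) n ▸ map_mem y (n + 1))

theorem exists_injective_comp_of_splitting {Z Y : Type*} [MetricSpace Z] [CompleteSpace Z]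
    (g : Z → Y) (P : Set Z → Prop) {C : Set Z} (hC : P C) (hne : ∀ U, P U → U.Nonempty)
    (hsplit : ∀ U, P U → ∀ ε : ℝ≥0∞, 0 < ε → ∃ V : Bool → Set Z,
      (∀ b, P (V b) ∧ V b ⊆ U ∧ Metric.ediam (V b) ≤ ε) ∧
      Pairwise fun a b => Disjoint (g '' closure (V a)) (g '' closure (V b))) :
    ∃ h : (ℕ → Bool) → Z, Injective (g ∘ h) := by
  choose V hV hVdisj using hsplit
  let ε : ℕ → ℝ≥0∞ := fun n => ((n + 1 : ℕ) : ℝ≥0∞)⁻¹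
  have hε : ∀ n, 0 < ε n := fun n => ENNReal.inv_pos.2 (ENNReal.natCast_ne_top _)
  let DP : List Bool → {U // P U} := fun l => l.rec ⟨C, hC⟩ fun a l U =>
    ⟨V U.1 U.2 (ε l.length) (hε _) a, (hV _ _ _ _ a).1⟩
  let D : List Bool → Set Z := fun l => closure (DP l).1
  have hanti : ClosureAntitone D :=
    Antitone.closureAntitone (fun l a => closure_mono (hV _ _ _ _ a).2.1) fun _ => isClosed_closure
  have hdiam : VanishingDiam D := by
    intro x
    refine (tendsto_add_atTop_iff_nat 1).1 <| tendsto_of_tendsto_of_tendsto_of_le_of_le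
      tendsto_const_nhds (ENNReal.tendsto_inv_nat_nhds_zero.comp (tendsto_add_atTop_nat 1))
      (fun _ => bot_le) fun n => ?_
    simp only [D, Metric.ediam_closure, res_succ]
    exact (hV _ _ _ _ _).2.2.trans_eq (by rw [res_length]; rfl)
  have hdom : (inducedMap D).1 = univ :=
    hanti.map_of_vanishingDiam hdiam fun l => (hne _ (DP l).2).mono subset_closure
  refine ⟨fun x => (inducedMap D).2 ⟨x, hdom ▸ mem_univ x⟩, fun x y hxy => ?_⟩
  exact congrArg Subtype.val
    (CantorScheme.injective_comp_map (A := D) (fun l a b hab => hVdisj _ _ _ _ hab) hxy)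

def imageCondensationSet {Z Y : Type*} [TopologicalSpace Z] (g : Z → Y) : Set Z :=
  (⋃₀ {U | IsOpen U ∧ (g '' U).Countable})ᶜ

section imageCondensationSet

variable {Z Y : Type*} [TopologicalSpace Z] [SecondCountableTopology Z] (g : Z → Y)

theorem countable_image_compl_imageCondensationSet :
    (g '' (imageCondensationSet g)ᶜ).Countable := by
  obtain ⟨T, hT, hTS, hTU⟩ :=
    TopologicalSpace.isOpen_sUnion_countable {U | IsOpen U ∧ (g '' U).Countable} fun _ h => h.1
  rw [imageCondensationSet, compl_compl, ← hTU, image_sUnion]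
  exact (hT.image _).sUnion (forall_mem_image.2 fun U hU => (hTS hU).2)

variable {g}

theorem not_countable_image_inter_imageCondensationSet {U : Set Z} (hU : IsOpen U)
    (hUW : (U ∩ imageCondensationSet g).Nonempty) :
    ¬(g '' (U ∩ imageCondensationSet g)).Countable := fun hcount => by
  obtain ⟨z, hzU, hzW⟩ := hUW
  refine hzW ⟨U, ⟨hU, ?_⟩, hzU⟩
  refine (hcount.union (countable_image_compl_imageCondensationSet g)).mono ?_
  rw [← image_union]
  exact image_mono fun x hx => (em (x ∈ imageCondensationSet g)).imp (⟨hx, ·⟩) id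

theorem imageCondensationSet_nonempty (hg : ¬(range g).Countable) :
    (imageCondensationSet g).Nonempty := by
  rw [nonempty_iff_ne_empty]
  intro hW
  apply hg
  simpa [hW] using countable_image_compl_imageCondensationSet g

end imageCondensationSet

theorem exists_split_imageCondensationSet {Z Y : Type*} [MetricSpace Z]
    [SecondCountableTopology Z] [TopologicalSpace Y] [T25Space Y] {g : Z → Y} (hg : Continuous g)
    {U : Set Z} (hU : IsOpen U)
    (hUW : (U ∩ imageCondensationSet g).Nonempty) {ε : ℝ≥0∞} (hε : 0 < ε) :
    ∃ V : Bool → Set Z,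
      (∀ b, (IsOpen (V b) ∧ (V b ∩ imageCondensationSet g).Nonempty) ∧ V b ⊆ U ∧
        Metric.ediam (V b) ≤ ε) ∧
      Pairwise fun a b => Disjoint (g '' closure (V a)) (g '' closure (V b)) := by
  obtain ⟨_, ⟨z₀, hz₀, rfl⟩, _, ⟨z₁, hz₁, rfl⟩, hne⟩ := not_subsingleton_iff.1
    (mt Subsingleton.countable (not_countable_image_inter_imageCondensationSet hU hUW))
  obtain ⟨O₀, hO₀, hO₀o, O₁, hO₁, hO₁o, hO⟩ := exists_open_nhds_disjoint_closure hne
  let z : Bool → Z := fun b => cond b z₁ z₀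
  let O : Bool → Set Y := fun b => cond b O₁ O₀
  have hzO : ∀ b, g (z b) ∈ O b := Bool.rec hO₀ hO₁
  have hOo : ∀ b, IsOpen (O b) := Bool.rec hO₀o hO₁o
  have hzUW : ∀ b, z b ∈ U ∩ imageCondensationSet g := Bool.rec hz₀ hz₁
  have hOdisj : Pairwise fun a b => Disjoint (closure (O a)) (closure (O b)) := by
    rintro (_ | _) (_ | _) hab <;> first | exact absurd rfl hab | exact hO | exact hO.symm
  refine ⟨fun b => U ∩ g ⁻¹' O b ∩ Metric.eball (z b) (ε / 2),
    fun b => ⟨⟨?_, ?_⟩, ?_, ?_⟩, fun a b hab => (hOdisj hab).mono ?_ ?_⟩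
  · exact (hU.inter ((hOo b).preimage hg)).inter Metric.isOpen_eball
  · refine ⟨z b, ⟨⟨(hzUW b).1, hzO b⟩, Metric.mem_eball_self ?_⟩, (hzUW b).2⟩
    simpa using hε.ne'
  · exact inter_subset_left.trans inter_subset_left
  · calc Metric.ediam _ ≤ Metric.ediam (Metric.eball (z b) (ε / 2)) :=
          Metric.ediam_mono inter_subset_right
      _ ≤ 2 * (ε / 2) := Metric.ediam_eball_le
      _ = ε := ENNReal.mul_div_cancel two_ne_zero ENNReal.ofNat_ne_top
  all_goals
    refine (image_closure_subset_closure_image hg).trans (closure_mono ?_)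
    rintro _ ⟨x, hx, rfl⟩
    exact hx.1.2

theorem Continuous.continuum_le_mk_range {Z : Type*} {Y : Type u} [TopologicalSpace Z]
    [PolishSpace Z] [TopologicalSpace Y] [T25Space Y] {g : Z → Y} (hg : Continuous g)
    (hrange : ¬(range g).Countable) : 𝔠 ≤ #(range g) := by
  let := TopologicalSpace.upgradeIsCompletelyMetrizable Z
  obtain ⟨h, hinj⟩ := exists_injective_comp_of_splitting g
    (fun U => IsOpen U ∧ (U ∩ imageCondensationSet g).Nonempty)
    ⟨isOpen_univ, by simpa using imageCondensationSet_nonempty hrange⟩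
    (fun _ hU => hU.2.mono inter_subset_left)
    fun _ hU _ hε => exists_split_imageCondensationSet hg hU.1 hU.2 hε
  calc 𝔠 = Cardinal.lift #(ℕ → Bool) := by simp
    _ ≤ Cardinal.lift #(range g) := Cardinal.lift_mk_le_lift_mk_of_injective
      (f := fun x => ⟨g (h x), mem_range_self _⟩) fun _ _ hxy => hinj (congrArg Subtype.val hxy)
    _ = #(range g) := Cardinal.lift_uzero _

theorem Measurable.continuum_le_mk_range {Z : Type*} {Y : Type u} [MeasurableSpace Z]
    [StandardBorelSpace Z] [TopologicalSpace Y] [T25Space Y] [SecondCountableTopology Y]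
    [MeasurableSpace Y] [OpensMeasurableSpace Y] {g : Z → Y} (hg : Measurable g)
    (hrange : ¬(range g).Countable) : 𝔠 ≤ #(range g) := by
  let := upgradeStandardBorel Z
  obtain ⟨t, -, hgt, ht⟩ := hg.exists_continuous
  exact @Continuous.continuum_le_mk_range _ _ t ht _ _ _ hgt hrange

theorem exists_injective_forall_mem_of_mk_Iio_lt {α Y : Type u} [LinearOrder α]
    [WellFoundedLT α] (S : α → Set Y) (hS : ∀ a, #(Iio a) < #(S a)) :
    ∃ c : α → Y, Injective c ∧ ∀ a, c a ∈ S a := by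
  have hfresh : ∀ a (prev : Iio a → Y), (S a \ range prev).Nonempty := fun a prev =>
    sdiff_nonempty.2 fun hsub => (hS a).not_ge <|
      (Cardinal.mk_le_mk_of_subset hsub).trans Cardinal.mk_range_le
  choose fresh hfresh using hfresh
  let c : α → Y := wellFounded_lt.fix fun a c' => fresh a fun b => c' b b.2
  have hc : ∀ a, c a = fresh a fun b => c b := wellFounded_lt.fix_eq _
  have hc_fresh : ∀ a, c a ∈ S a \ range fun b : Iio a => c b := fun a => hc a ▸ hfresh a _
  refine ⟨c, fun a b hab => ?_, fun a => (hc_fresh a).1⟩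
  rcases lt_trichotomy a b with h | h | h
  · exact absurd ⟨⟨a, h⟩, hab⟩ (hc_fresh b).2
  · exact h
  · exact absurd ⟨⟨b, h⟩, hab.symm⟩ (hc_fresh a).2

theorem exists_inter_nonempty_and_diff_nonempty {ι Y : Type u} {κ : Cardinal.{u}}
    (hκ : ℵ₀ ≤ κ) (S : ι → Set Y) (hι : #ι ≤ κ) (hS : ∀ i, κ ≤ #(S i)) :
    ∃ T : Set Y, ∀ i, (S i ∩ T).Nonempty ∧ (S i \ T).Nonempty := by
  cases isEmpty_or_nonempty ι
  · exact ⟨∅, isEmptyElim⟩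
  have hcard : #(ι × Bool) ≤ #κ.ord.ToType := by
    rw [Cardinal.mk_ord_toType, Cardinal.mk_prod, Cardinal.lift_uzero, Cardinal.mk_bool,
      Cardinal.lift_ofNat]
    exact Cardinal.mul_le_of_le hκ hι ((Cardinal.natCast_lt_aleph0 (n := 2)).le.trans hκ)
  -- Each `S i` is visited twice along a well-order of type `κ`: the `true` visit puts a point
  -- into `T`, the `false` visit a point that stays outside it.
  obtain ⟨ψ, hψ⟩ : ∃ ψ : κ.ord.ToType → ι × Bool, Surjective ψ := by
    obtain ⟨e⟩ := hcard
    exact ⟨invFun e, invFun_surjective e.injective⟩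
  obtain ⟨c, hc, hcS⟩ := exists_injective_forall_mem_of_mk_Iio_lt (fun j => S (ψ j).1)
    fun j => (by simpa using Cardinal.mk_Iio_lt j (by simp) : #(Iio j) < κ).trans_le (hS _)
  refine ⟨c '' {j | (ψ j).2}, fun i => ?_⟩
  obtain ⟨j₁, hj₁⟩ := hψ (i, true)
  obtain ⟨j₀, hj₀⟩ := hψ (i, false)
  refine ⟨⟨c j₁, by simpa [hj₁] using hcS j₁, j₁, by simp [hj₁], rfl⟩,
    ⟨c j₀, by simpa [hj₀] using hcS j₀, ?_⟩⟩
  rintro ⟨j, hj, hcj⟩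
  rw [hc hcj] at hj
  simp [hj₀] at hj

theorem MeasurableSpace.mk_measurableSet_le_continuum_s8 {α : Type u} [MeasurableSpace α]
    [CountablyGenerated α] : #{s : Set α | MeasurableSet s} ≤ 𝔠 := by
  obtain ⟨b, hb, hgen⟩ := CountablyGenerated.isCountablyGenerated (α := α)
  have := cardinal_measurableSet_le_continuum (hb.le_aleph0.trans Cardinal.aleph0_le_continuum)
  rwa [← hgen] at this

section SigmaIdeal

variable {X : Type*} {𝓘 : Set (Set X)}

theorem iUnion_mem_of_countable
    (hUnion : ∀ f : ℕ → Set X, (∀ n, f n ∈ 𝓘) → (⋃ n, f n) ∈ 𝓘) (hempty : ∅ ∈ 𝓘)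
    {ι : Type*} [Countable ι] {F : ι → Set X} (hF : ∀ i, F i ∈ 𝓘) :
    ⋃ i, F i ∈ 𝓘 := by
  cases isEmpty_or_nonempty ι
  · rwa [iUnion_of_empty]
  obtain ⟨e, he⟩ := exists_surjective_nat ι
  rw [← he.iUnion_comp]
  exact hUnion _ fun n => hF (e n)

theorem union_mem (hUnion : ∀ f : ℕ → Set X, (∀ n, f n ∈ 𝓘) → (⋃ n, f n) ∈ 𝓘)
    (hempty : ∅ ∈ 𝓘) {A B : Set X} (hA : A ∈ 𝓘) (hB : B ∈ 𝓘) : A ∪ B ∈ 𝓘 := by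
  rw [union_eq_iUnion]
  exact iUnion_mem_of_countable hUnion hempty (Bool.rec hB hA)

theorem not_countable_range_of_fiber_mem (hDown : ∀ A B : Set X, A ⊆ B → B ∈ 𝓘 → A ∈ 𝓘)
    (hUnion : ∀ f : ℕ → Set X, (∀ n, f n ∈ 𝓘) → (⋃ n, f n) ∈ 𝓘) (hempty : ∅ ∈ 𝓘)
    {Y : Type*} {C : Set X} (hC : C ∉ 𝓘) (g : C → Y)
    (hfib : ∀ y, Subtype.val '' (g ⁻¹' {y}) ∈ 𝓘) : ¬(range g).Countable := fun hcount => by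
  have := hcount.to_subtype
  refine hC (hDown _ _ (fun x hx => ?_)
    (iUnion_mem_of_countable hUnion hempty fun y : range g => hfib y))
  exact mem_iUnion.2 ⟨⟨g ⟨x, hx⟩, mem_range_self _⟩, ⟨x, hx⟩, rfl, rfl⟩

theorem continuum_le_mk_image_preimage_val [MeasurableSpace X] [StandardBorelSpace X]
    {Y : Type u} [TopologicalSpace Y] [T25Space Y] [SecondCountableTopology Y]
    [MeasurableSpace Y] [OpensMeasurableSpace Y] (hDown : ∀ A B : Set X, A ⊆ B → B ∈ 𝓘 → A ∈ 𝓘)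
    (hUnion : ∀ f : ℕ → Set X, (∀ n, f n ∈ 𝓘) → (⋃ n, f n) ∈ 𝓘) (hempty : ∅ ∈ 𝓘)
    {I J : Set X} (hIJ : I ⊆ J) (hJ : MeasurableSet J) (hJ𝓘 : J ∈ 𝓘)
    {f : ↥Iᶜ → Y} (hf : Measurable f) (hfib : ∀ y : Y, Subtype.val '' (f ⁻¹' {y}) ∈ 𝓘)
    {B : Set X} (hB : MeasurableSet B) (hB𝓘 : B ∉ 𝓘) :
    𝔠 ≤ #(f '' (Subtype.val ⁻¹' B)) := by
  have hBJ : B \ J ∉ 𝓘 := fun h =>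
    hB𝓘 (hDown _ _ (subset_sdiff_union B J) (union_mem hUnion hempty h hJ𝓘))
  have := (hB.diff hJ).standardBorel
  let g : ↥(B \ J) → Y := fun x => f ⟨x, fun hxI => x.2.2 (hIJ hxI)⟩
  have hg : Measurable g := hf.comp measurable_subtype_coe.subtype_mk
  refine (hg.continuum_le_mk_range (not_countable_range_of_fiber_mem hDown hUnion hempty hBJ g
    fun y => hDown _ _ ?_ (hfib y))).trans (Cardinal.mk_le_mk_of_subset ?_)
  · rintro _ ⟨x, hx, rfl⟩
    exact ⟨_, hx, rfl⟩
  · rintro _ ⟨x, rfl⟩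
    exact ⟨_, x.2.1, rfl⟩

end SigmaIdeal

theorem stmt_8_general {X : Type} [TopologicalSpace X] [PolishSpace X]
    [MeasurableSpace X] [BorelSpace X]
    {Y : Type} [TopologicalSpace Y] [PolishSpace Y] [MeasurableSpace Y] [BorelSpace Y]
    (𝓘 : Set (Set X))
    (hDown : ∀ A B : Set X, A ⊆ B → B ∈ 𝓘 → A ∈ 𝓘)
    (hUnion : ∀ f : ℕ → Set X, (∀ n, f n ∈ 𝓘) → (⋃ n, f n) ∈ 𝓘)
    (hBase : ∀ A ∈ 𝓘, ∃ B : Set X, A ⊆ B ∧ MeasurableSet B ∧ B ∈ 𝓘)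
    (I : Set X) (hI : I ∈ 𝓘)
    (f : ↥Iᶜ → Y) (hf : Measurable f)
    (hfib : ∀ y : Y, Subtype.val '' (f ⁻¹' {y}) ∈ 𝓘) :
    ∃ T : Set Y, ∀ B : Set X, MeasurableSet B → B ∉ 𝓘 →
      (Subtype.val '' (f ⁻¹' T) ∩ B).Nonempty ∧ (B \ Subtype.val '' (f ⁻¹' T)).Nonempty := by
  have hempty : ∅ ∈ 𝓘 := hDown _ _ (empty_subset I) hI
  obtain ⟨J, hIJ, hJ, hJ𝓘⟩ := hBase I hI
  let ℬ : Set (Set X) := {B | MeasurableSet B ∧ B ∉ 𝓘}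
  obtain ⟨T, hT⟩ := exists_inter_nonempty_and_diff_nonempty Cardinal.aleph0_le_continuum
    (fun B : ℬ => f '' (Subtype.val ⁻¹' B.1))
    ((Cardinal.mk_le_mk_of_subset fun B hB => hB.1).trans
      MeasurableSpace.mk_measurableSet_le_continuum_s8)
    fun B => continuum_le_mk_image_preimage_val hDown hUnion hempty hIJ hJ hJ𝓘 hf hfib B.2.1 B.2.2
  refine ⟨T, fun B hB hB𝓘 => ?_⟩
  obtain ⟨⟨_, ⟨x, hxB, rfl⟩, hxT⟩, ⟨_, ⟨x', hx'B, rfl⟩, hx'T⟩⟩ := hT ⟨B, hB, hB𝓘⟩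
  refine ⟨⟨x, ⟨x, hxT, rfl⟩, hxB⟩, x', hx'B, ?_⟩
  rintro ⟨z, hz, hzx⟩
  exact hx'T (Subtype.val_injective hzx ▸ hz)

theorem stmt_8 {X : Type} [TopologicalSpace X] [PolishSpace X] [Uncountable X]
    [MeasurableSpace X] [BorelSpace X]
    {Y : Type} [TopologicalSpace Y] [PolishSpace Y] [MeasurableSpace Y] [BorelSpace Y]
    (𝓘 : Set (Set X))
    (hDown : ∀ A B : Set X, A ⊆ B → B ∈ 𝓘 → A ∈ 𝓘)
    (hUnion : ∀ f : ℕ → Set X, (∀ n, f n ∈ 𝓘) → (⋃ n, f n) ∈ 𝓘)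
    (hProper : (univ : Set X) ∉ 𝓘)
    (hSing : ∀ x : X, ({x} : Set X) ∈ 𝓘)
    (hBase : ∀ A ∈ 𝓘, ∃ B : Set X, A ⊆ B ∧ MeasurableSet B ∧ B ∈ 𝓘)
    (hccc : ∀ 𝒟 : Set (Set X), (∀ D ∈ 𝒟, MeasurableSet D ∧ D ∉ 𝓘) →
      𝒟.PairwiseDisjoint id → 𝒟.Countable)
    (I : Set X) (hI : I ∈ 𝓘)
    (f : ↥Iᶜ → Y) (hf : Measurable f)
    (hfib : ∀ y : Y, Subtype.val '' (f ⁻¹' {y}) ∈ 𝓘) :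
    ∃ T : Set Y, ∀ B : Set X, MeasurableSet B → B ∉ 𝓘 →
      (Subtype.val '' (f ⁻¹' T) ∩ B).Nonempty ∧ (B \ Subtype.val '' (f ⁻¹' T)).Nonempty :=
  stmt_8_general 𝓘 hDown hUnion hBase I hI f hf hfib
end
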